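/- Let d be a positive natural number, let (E_k)_{k ∈ K} be a finite family of effects in Matrix (Fin d) (Fin d) ℂ (each E_k and 1 − E_k positive semidefinite) with ∑_k E_k = 1, and let B ∈ Matrix (Fin d) (Fin d) ℂ be an effect. Then ∑_k E_k^{1/2} B E_k^{1/2} = B if and only if E_k B = B E_k for all k ∈ K. -/

import Mathlib

open scoped ComplexOrder Matrix

/-- The square root of a positive semidefinite matrix, as defined in Mathlib (Dec 2024). -/
noncomputable def Matrix.PosSemidef.sqrt {n : Type*} {𝕜 : Type*} [Fintype n] [RCLike 𝕜]
    [DecidableEq n] {A : Matrix n n 𝕜} (hA : A.PosSemidef) : Matrix n n 𝕜 :=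
  hA.1.eigenvectorUnitary.1 * Matrix.diagonal ((↑) ∘ Real.sqrt ∘ hA.1.eigenvalues) *
  (star hA.1.eigenvectorUnitary : Matrix n n 𝕜)

/-!
Write `C_k = E_k^{1/2}`. For Hermitian `B` and `C_k`, the trace of `[C_k, B]ᴴ [C_k, B]` equals
`2 tr((C_k² B - C_k B C_k) B)`; summed over `k` this is `2 tr((B - Φ(B)) B)` with `Φ` the Lüders
operation, since `∑ C_k² = 1`. So a fixed point of `Φ` makes a sum of nonnegative traces vanish,
hence every commutator `[C_k, B]` vanishes, and then `B` commutes with `E_k = C_k²`. Conversely,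
if `B` commutes with `E_k`, it commutes with `C_k = √E_k` by the continuous functional calculus,
and `Φ(B) = B ∑ E_k = B`.
-/

namespace Matrix

variable {n 𝕜 : Type*} [Fintype n] [DecidableEq n] [RCLike 𝕜]

namespace PosSemidef

variable {A : Matrix n n 𝕜}

theorem sqrt_eq_cfc (hA : A.PosSemidef) : hA.sqrt = cfc Real.sqrt A := by
  rw [hA.1.cfc_eq, IsHermitian.cfc, Unitary.conjStarAlgAut_apply]
  rfl

theorem sqrt_mul_self (hA : A.PosSemidef) : hA.sqrt * hA.sqrt = A := by
  have hspec : ∀ x ∈ spectrum ℝ A, 0 ≤ x := by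
    rw [hA.1.spectrum_real_eq_range_eigenvalues]
    rintro _ ⟨i, rfl⟩
    exact hA.eigenvalues_nonneg i
  rw [sqrt_eq_cfc, ← cfc_mul Real.sqrt Real.sqrt A]
  conv_rhs => rw [← cfc_id' ℝ A hA.1.isSelfAdjoint]
  exact cfc_congr fun x hx => Real.mul_self_sqrt (hspec x hx)

theorem isHermitian_sqrt (hA : A.PosSemidef) : hA.sqrt.IsHermitian := by
  rw [sqrt_eq_cfc]
  exact cfc_predicate _ _

theorem commute_sqrt (hA : A.PosSemidef) {B : Matrix n n 𝕜} (h : Commute A B) :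
    Commute hA.sqrt B := by
  rw [sqrt_eq_cfc]
  exact h.cfc_real _

end PosSemidef

theorem trace_conjTranspose_mul_self_commutator {B C : Matrix n n 𝕜} (hB : B.IsHermitian)
    (hC : C.IsHermitian) :
    ((C * B - B * C)ᴴ * (C * B - B * C)).trace = 2 * ((C * C * B - C * B * C) * B).trace := by
  have hsquares : (B * (C * C * B)).trace = (C * C * B * B).trace := trace_mul_comm _ _
  have hsquares' : (C * (B * B * C)).trace = (C * C * B * B).trace := by
    rw [trace_mul_comm, Matrix.mul_assoc (B * B), trace_mul_comm, ← Matrix.mul_assoc]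
  have hcycle : (B * C * B * C).trace = (C * B * C * B).trace := by
    rw [trace_mul_comm]
    simp only [Matrix.mul_assoc]
  have hexpand : (B * C - C * B) * (C * B - B * C) =
      B * (C * C * B) - B * C * B * C - C * B * C * B + C * (B * B * C) := by noncomm_ring
  rw [conjTranspose_sub, conjTranspose_mul, conjTranspose_mul, hB.eq, hC.eq, hexpand, trace_add,
    trace_sub, trace_sub, hsquares, hsquares', hcycle, sub_mul, trace_sub]
  ring

variable {K : Type*} [Fintype K]

theorem sum_mul_mul_eq_self_iff_forall_commute {C : K → Matrix n n 𝕜}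
    (hC : ∀ k, (C k).IsHermitian) (hsum : ∑ k, C k * C k = 1) {B : Matrix n n 𝕜}
    (hB : B.IsHermitian) : ∑ k, C k * B * C k = B ↔ ∀ k, Commute (C k) B := by
  constructor
  · intro hfixed k
    have htrace : ∑ k, ((C k * B - B * C k)ᴴ * (C k * B - B * C k)).trace = 0 := by
      simp only [trace_conjTranspose_mul_self_commutator hB (hC _), ← Finset.mul_sum,
        ← trace_sum, ← Finset.sum_mul, Finset.sum_sub_distrib, hsum, Matrix.one_mul, hfixed,
        sub_self, Matrix.zero_mul, trace_zero, mul_zero]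
    have hnonneg : ∀ k ∈ Finset.univ, 0 ≤ ((C k * B - B * C k)ᴴ * (C k * B - B * C k)).trace :=
      fun k _ => (posSemidef_conjTranspose_mul_self _).trace_nonneg
    have hk := (Finset.sum_eq_zero_iff_of_nonneg hnonneg).mp htrace k (Finset.mem_univ k)
    exact sub_eq_zero.mp (trace_conjTranspose_mul_self_eq_zero_iff.mp hk)
  · intro hcomm
    calc ∑ k, C k * B * C k = ∑ k, B * (C k * C k) := by
          simp only [(hcomm _).eq, Matrix.mul_assoc]
      _ = B := by rw [← Finset.mul_sum, hsum, Matrix.mul_one]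

end Matrix

theorem generalized_lueders_discrete_general
    (d : ℕ) (K : Type) [Fintype K]
    (E : K → Matrix (Fin d) (Fin d) ℂ)
    (hE : ∀ k, (E k).PosSemidef)
    (hsum : ∑ k, E k = 1)
    (B : Matrix (Fin d) (Fin d) ℂ) (hB : B.PosSemidef) :
    (∑ k, (hE k).sqrt * B * (hE k).sqrt = B) ↔ (∀ k, E k * B = B * E k) := by
  have hsqrt : ∑ k, (hE k).sqrt * (hE k).sqrt = 1 := by
    simpa only [Matrix.PosSemidef.sqrt_mul_self] using hsum
  rw [Matrix.sum_mul_mul_eq_self_iff_forall_commute (fun k => (hE k).isHermitian_sqrt) hsqrt hB.1]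
  refine forall_congr' fun k => ⟨fun h => ?_, (hE k).commute_sqrt⟩
  simpa only [(hE k).sqrt_mul_self] using (h.mul_left h).eq

/-- Generalized Lüders theorem for a discrete unsharp observable `(E_k)` in finite
dimension: the nonselective generalized Lüders operation leaves the effect `B`
undisturbed iff `B` commutes with every `E_k`. -/
theorem generalized_lueders_discrete
    (d : ℕ) (hd : 0 < d) (K : Type) [Fintype K]
    (E : K → Matrix (Fin d) (Fin d) ℂ)
    (hE : ∀ k, (E k).PosSemidef) (hE' : ∀ k, (1 - E k).PosSemidef)
    (hsum : ∑ k, E k = 1)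
    (B : Matrix (Fin d) (Fin d) ℂ) (hB : B.PosSemidef) (hB' : (1 - B).PosSemidef) :
    (∑ k, (hE k).sqrt * B * (hE k).sqrt = B) ↔ (∀ k, E k * B = B * E k) :=
  generalized_lueders_discrete_general d K E hE hsum B hB
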